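/- arXiv:math/0608607 — 2 statements merged into one kernel-verified Lean document; each statement's English description precedes it below -/
import Mathlib

section
/- Let v be obtained from a paperfolding word over {1,4} by setting v_{4n}=2, v_{4n+2}=3, v_{2n+1}=f_{2n+1}, and let h be the morphism 1→00, 2→11, 3→12, 4→02. Then w = h(v) is an infinite word over {0,1,2} that contains no overlaps (2^+-powers) and no squares xx with |x| ≥ 2 in any arithmetic progression of odd difference. -/
def IsSubword {α : Type*} (f : ℕ → α) (x : List α) : Prop :=
  ∃ i, x = (List.range x.length).map fun m => f (i + m)

def IsPaperfolding14 (f : ℕ → ℕ) : Prop :=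
  ∃ (g : ℕ → ℕ → ℕ) (a : ℕ → ℕ), g 0 = f ∧
    ∀ k, (a k = 1 ∨ a k = 4) ∧ (∀ n, g k (4 * n) = a k) ∧
      (∀ n, g k (4 * n + 2) = 5 - a k) ∧
      ∀ n, g (k + 1) n = g k (2 * n + 1)

/-- The morphism `1 → 00`, `2 → 11`, `3 → 12`, `4 → 02`. -/
def hMorph (c : ℕ) : List ℕ :=
  if c = 1 then [0, 0] else if c = 2 then [1, 1]
  else if c = 3 then [1, 2] else [0, 2]

/-- Values of any level of a paperfolding system lie in `{1, 4}`. -/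
lemma pf_values (g : ℕ → ℕ → ℕ) (a : ℕ → ℕ)
    (hS : ∀ k, (a k = 1 ∨ a k = 4) ∧ (∀ n, g k (4 * n) = a k) ∧
      (∀ n, g k (4 * n + 2) = 5 - a k) ∧ ∀ n, g (k + 1) n = g k (2 * n + 1)) :
    ∀ n k, g k n = 1 ∨ g k n = 4 := by
  intro n
  induction n using Nat.strong_induction_on with
  | _ n ih =>
    intro k
    rcases (by omega : n % 2 = 1 ∨ n % 4 = 0 ∨ n % 4 = 2) with h | h | h
    · obtain ⟨m, rfl⟩ : ∃ m, n = 2 * m + 1 := ⟨n / 2, by omega⟩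
      rw [← (hS k).2.2.2 m]
      exact ih m (by omega) (k + 1)
    · obtain ⟨m, rfl⟩ : ∃ m, n = 4 * m := ⟨n / 4, by omega⟩
      rw [(hS k).2.1 m]
      exact (hS k).1
    · obtain ⟨m, rfl⟩ : ∃ m, n = 4 * m + 2 := ⟨n / 4, by omega⟩
      rw [(hS k).2.2.1 m]
      rcases (hS k).1 with h1 | h1 <;> omega

/-- No level of a paperfolding system contains, along an arithmetic progression of
odd difference, `σ` consecutive equalities at distance `σ`, for `σ` even, `σ ≥ 2`. -/
lemma pf_no_even_square (g : ℕ → ℕ → ℕ) (a : ℕ → ℕ)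
    (hS : ∀ k, (a k = 1 ∨ a k = 4) ∧ (∀ n, g k (4 * n) = a k) ∧
      (∀ n, g k (4 * n + 2) = 5 - a k) ∧ ∀ n, g (k + 1) n = g k (2 * n + 1)) :
    ∀ σ, 2 ≤ σ → σ % 2 = 0 → ∀ k e0 j, j % 2 = 1 →
      ¬ (∀ r < σ, g k (e0 + r * j) = g k (e0 + (r + σ) * j)) := by
  intro σ
  induction σ using Nat.strong_induction_on with
  | _ σ ih =>
    intro h2 heven k e0 j hj H
    have hEv : ∀ Q, Q % 2 = 0 → g k (2 * Q) = a k := by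
      intro Q hQ
      obtain ⟨m, rfl⟩ : ∃ m, Q = 2 * m := ⟨Q / 2, by omega⟩
      rw [show 2 * (2 * m) = 4 * m from by ring, (hS k).2.1 m]
    have hOd : ∀ Q, Q % 2 = 1 → g k (2 * Q) = 5 - a k := by
      intro Q hQ
      obtain ⟨m, rfl⟩ : ∃ m, Q = 2 * m + 1 := ⟨Q / 2, by omega⟩
      rw [show 2 * (2 * m + 1) = 4 * m + 2 from by ring, (hS k).2.2.1 m]
    rcases (by omega : σ % 4 = 2 ∨ σ % 4 = 0) with h4 | h4
    · -- σ ≡ 2 (mod 4) : the even positions alternate between `a k` and `5 - a k`.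
      obtain ⟨s, hs⟩ : ∃ s, σ = 2 * s := ⟨σ / 2, by omega⟩
      obtain ⟨r, hr2, hre⟩ : ∃ r, r < 2 ∧ (e0 + r * j) % 2 = 0 := by
        by_contra hcon
        push_neg at hcon
        have h0 := hcon 0 (by omega)
        have h1 := hcon 1 (by omega)
        omega
      obtain ⟨Q, hQ⟩ : ∃ Q, e0 + r * j = 2 * Q := ⟨(e0 + r * j) / 2, by omega⟩
      have hkey := H r (by omega)
      have harg : e0 + (r + σ) * j = 2 * (Q + s * j) := by
        have h' : (r + σ) * j = r * j + 2 * (s * j) := by rw [hs]; ring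
        omega
      rw [hQ, harg] at hkey
      have hsj : (s * j) % 2 = 1 := by
        rw [Nat.mul_mod, show s % 2 = 1 from by omega, hj]
      rcases (by omega : Q % 2 = 0 ∨ Q % 2 = 1) with hQ2 | hQ2
      · rw [hEv Q hQ2, hOd (Q + s * j) (by omega)] at hkey
        rcases (hS k).1 with h1 | h1 <;> omega
      · rw [hOd Q hQ2, hEv (Q + s * j) (by omega)] at hkey
        rcases (hS k).1 with h1 | h1 <;> omega
    · -- σ ≡ 0 (mod 4) : pass to the next level of the paperfolding system.
      obtain ⟨s, hs⟩ : ∃ s, σ = 2 * s := ⟨σ / 2, by omega⟩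
      obtain ⟨r0, hr2, hro⟩ : ∃ r0, r0 < 2 ∧ (e0 + r0 * j) % 2 = 1 := by
        by_contra hcon
        push_neg at hcon
        have h0 := hcon 0 (by omega)
        have h1 := hcon 1 (by omega)
        omega
      obtain ⟨Q0, hQ0⟩ : ∃ Q0, e0 + r0 * j = 2 * Q0 + 1 := ⟨(e0 + r0 * j) / 2, by omega⟩
      apply ih s (by omega) (by omega) (by omega) (k + 1) Q0 j hj
      intro r' hr'
      have hkey := H (r0 + 2 * r') (by omega)
      have ha1 : e0 + (r0 + 2 * r') * j = 2 * (Q0 + r' * j) + 1 := by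
        have h' : (r0 + 2 * r') * j = r0 * j + 2 * (r' * j) := by ring
        omega
      have ha2 : e0 + (r0 + 2 * r' + σ) * j = 2 * (Q0 + (r' + s) * j) + 1 := by
        have h' : (r0 + 2 * r' + σ) * j = r0 * j + 2 * (r' * j) + 2 * (s * j) := by
          rw [hs]; ring
        have h'' : (r' + s) * j = r' * j + s * j := by ring
        omega
      rw [ha1, ha2] at hkey
      rw [(hS k).2.2.2 (Q0 + r' * j), (hS k).2.2.2 (Q0 + (r' + s) * j)]
      exact hkey

/-- The key lemma: the word `w` (described through its residue structure) has no
`c ≥ max(t,2)` consecutive equalities at distance `t ≥ 1` along an AP of odd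
difference `j`. -/
lemma key_lemma (w f : ℕ → ℕ)
    (hP0 : ∀ p, p % 4 = 0 → w p = 1)
    (hP2 : ∀ p, p % 4 = 2 → w p = 0)
    (hP1 : ∀ p, p % 8 = 1 → w p = 1)
    (hP5 : ∀ p, p % 8 = 5 → w p = 2)
    (hP3 : ∀ p, p % 4 = 3 →
      (f ((p - 1) / 2) = 1 ∧ w p = 0) ∨ (f ((p - 1) / 2) = 4 ∧ w p = 2))
    (hg : ∀ σ, 2 ≤ σ → σ % 2 = 0 → ∀ e0 j, j % 2 = 1 →
      ¬ (∀ r < σ, f (2 * (e0 + r * j) + 1) = f (2 * (e0 + (r + σ) * j) + 1)))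
    (j : ℕ) (hj : j % 2 = 1) (q0 t c : ℕ) (ht : 1 ≤ t) (hc2 : 2 ≤ c) (htc : t ≤ c)
    (heq : ∀ r < c, w (q0 + r * j) = w (q0 + r * j + t * j)) : False := by
  have inv1 : ∀ p, p % 2 = 1 → w p = 1 → p % 8 = 1 := by
    intro p hp h1
    rcases (by omega : p % 8 = 1 ∨ p % 8 = 5 ∨ p % 4 = 3) with h | h | h
    · exact h
    · have := hP5 p h; omega
    · rcases hP3 p h with ⟨_, h0⟩ | ⟨_, h0⟩ <;> omega
  have inv0 : ∀ p, p % 2 = 1 → w p = 0 → p % 4 = 3 := by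
    intro p hp h1
    rcases (by omega : p % 8 = 1 ∨ p % 8 = 5 ∨ p % 4 = 3) with h | h | h
    · have := hP1 p h; omega
    · have := hP5 p h; omega
    · exact h
  rcases (by omega : t % 2 = 1 ∨ t % 4 = 2 ∨ t % 8 = 4 ∨ t % 8 = 0) with h | h | h | h
  · -- t odd
    have hT2 : (t * j) % 2 = 1 := by
      rw [Nat.mul_mod, h, hj]
    have deriv_e : ∀ p, p % 2 = 0 → w p = w (p + t * j) → (t * j) % 4 = 1 := by
      intro p hp he
      rcases (by omega : p % 4 = 0 ∨ p % 4 = 2) with h4 | h4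
      · rw [hP0 p h4] at he
        have := inv1 (p + t * j) (by omega) he.symm
        omega
      · rw [hP2 p h4] at he
        have := inv0 (p + t * j) (by omega) he.symm
        omega
    have deriv_o : ∀ p, p % 2 = 1 → w p = w (p + t * j) → (t * j) % 4 = 3 := by
      intro p hp he
      rcases (by omega : (p + t * j) % 4 = 0 ∨ (p + t * j) % 4 = 2) with h4 | h4
      · rw [hP0 _ h4] at he
        have := inv1 p hp he
        omega
      · rw [hP2 _ h4] at he
        have := inv0 p hp he
        omega
    have e0 : w q0 = w (q0 + t * j) := by
      have := heq 0 (by omega)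
      simpa using this
    have e1 : w (q0 + j) = w (q0 + j + t * j) := by
      have := heq 1 (by omega)
      simpa using this
    rcases (by omega : q0 % 2 = 0 ∨ q0 % 2 = 1) with hq | hq
    · have a1 := deriv_e q0 hq e0
      have a2 := deriv_o (q0 + j) (by omega) e1
      omega
    · have a1 := deriv_o q0 hq e0
      have a2 := deriv_e (q0 + j) (by omega) e1
      omega
  · -- t ≡ 2 (mod 4)
    have hT4 : (t * j) % 4 = 2 := by
      rcases (by omega : j % 4 = 1 ∨ j % 4 = 3) with hj4 | hj4 <;>
        rw [Nat.mul_mod, h, hj4]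
    obtain ⟨r, hr2, hre⟩ : ∃ r, r < 2 ∧ (q0 + r * j) % 2 = 0 := by
      by_contra hcon
      push_neg at hcon
      have h0 := hcon 0 (by omega)
      have h1 := hcon 1 (by omega)
      omega
    have he := heq r (by omega)
    rcases (by omega : (q0 + r * j) % 4 = 0 ∨ (q0 + r * j) % 4 = 2) with h4 | h4
    · rw [hP0 _ h4, hP2 _ (by omega)] at he
      omega
    · rw [hP2 _ h4, hP0 _ (by omega)] at he
      omega
  · -- t ≡ 4 (mod 8)
    have hT8 : (t * j) % 8 = 4 := by
      rcases (by omega : j % 8 = 1 ∨ j % 8 = 3 ∨ j % 8 = 5 ∨ j % 8 = 7) with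
        hj8 | hj8 | hj8 | hj8 <;> rw [Nat.mul_mod, h, hj8]
    obtain ⟨r, hr4, hre⟩ : ∃ r, r < 4 ∧ (q0 + r * j) % 4 = 1 := by
      by_contra hcon
      push_neg at hcon
      have h0 := hcon 0 (by omega)
      have h1 := hcon 1 (by omega)
      have h2 := hcon 2 (by omega)
      have h3 := hcon 3 (by omega)
      rcases (by omega : j % 4 = 1 ∨ j % 4 = 3) with hj4 | hj4 <;> omega
    have he := heq r (by omega)
    rcases (by omega : (q0 + r * j) % 8 = 1 ∨ (q0 + r * j) % 8 = 5) with h8 | h8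
    · rw [hP1 _ h8, hP5 _ (by omega)] at he
      omega
    · rw [hP5 _ h8, hP1 _ (by omega)] at he
      omega
  · -- t ≡ 0 (mod 8) : reduce to the paperfolding word along an odd AP.
    obtain ⟨b, hb⟩ : ∃ b, t = 8 * b := ⟨t / 8, by omega⟩
    have hb1 : 1 ≤ b := by omega
    obtain ⟨r0, hr4, hre⟩ : ∃ r0, r0 < 4 ∧ (q0 + r0 * j) % 4 = 3 := by
      by_contra hcon
      push_neg at hcon
      have h0 := hcon 0 (by omega)
      have h1 := hcon 1 (by omega)
      have h2 := hcon 2 (by omega)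
      have h3 := hcon 3 (by omega)
      rcases (by omega : j % 4 = 1 ∨ j % 4 = 3) with hj4 | hj4 <;> omega
    obtain ⟨K, hK⟩ : ∃ K, q0 + r0 * j = 4 * K + 3 := ⟨(q0 + r0 * j) / 4, by omega⟩
    apply hg (2 * b) (by omega) (by omega) K j hj
    intro r' hr'
    have he := heq (r0 + 4 * r') (by omega)
    have hp : q0 + (r0 + 4 * r') * j = 4 * (K + r' * j) + 3 := by
      have h' : (r0 + 4 * r') * j = r0 * j + 4 * (r' * j) := by ring
      omega
    have hp' : q0 + (r0 + 4 * r') * j + t * j = 4 * (K + (r' + 2 * b) * j) + 3 := by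
      have h1 : (r0 + 4 * r') * j = r0 * j + 4 * (r' * j) := by ring
      have h2 : t * j = 8 * (b * j) := by rw [hb]; ring
      have h3 : (r' + 2 * b) * j = r' * j + 2 * (b * j) := by ring
      omega
    rw [hp', hp] at he
    have c1 := hP3 _ (by omega : (4 * (K + r' * j) + 3) % 4 = 3)
    have c2 := hP3 _ (by omega : (4 * (K + (r' + 2 * b) * j) + 3) % 4 = 3)
    rw [show (4 * (K + r' * j) + 3 - 1) / 2 = 2 * (K + r' * j) + 1 from by omega] at c1
    rw [show (4 * (K + (r' + 2 * b) * j) + 3 - 1) / 2 = 2 * (K + (r' + 2 * b) * j) + 1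
      from by omega] at c2
    rcases c1 with ⟨hf1, hw1⟩ | ⟨hf1, hw1⟩ <;> rcases c2 with ⟨hf2, hw2⟩ | ⟨hf2, hw2⟩ <;>
      omega

/-- `getElem?` of a power `x^k x'` (with `x'` a prefix of `x`) is periodic. -/
lemma rep_getElem? (x x' : List ℕ) (hpre : x' <+: x) :
    ∀ k s, s < ((List.replicate k x).flatten ++ x').length →
      ((List.replicate k x).flatten ++ x')[s]? = x[s % x.length]? := by
  intro k
  induction k with
  | zero =>
    intro s hs
    simp only [List.replicate_zero, List.flatten_nil, List.nil_append] at hs ⊢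
    have hsx : s < x'.length := by simpa using hs
    have h1 : x'[s]? = x[s]? := by
      obtain ⟨u, rfl⟩ := hpre
      rw [List.getElem?_append_left hsx]
    rw [h1, Nat.mod_eq_of_lt (lt_of_lt_of_le hsx hpre.length_le)]
  | succ k ihk =>
    intro s hs
    have hx0 : 0 < x.length := by
      rcases Nat.eq_zero_or_pos x.length with h0 | h0
      · have hx' : x'.length = 0 := by
          have := hpre.length_le; omega
        simp [List.replicate, List.length_flatten, h0] at hs
        · omega
      · exact h0
    rw [List.replicate_succ, List.flatten_cons, List.append_assoc]
    rcases Nat.lt_or_ge s x.length with hlt | hge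
    · rw [List.getElem?_append_left hlt, Nat.mod_eq_of_lt hlt]
    · rw [List.getElem?_append_right hge]
      have hlen : s - x.length < ((List.replicate k x).flatten ++ x').length := by
        simp only [List.length_append, List.length_flatten, List.map_replicate,
          List.sum_replicate, smul_eq_mul, List.replicate_succ, List.flatten_cons] at hs ⊢
        omega
      rw [ihk (s - x.length) hlen]
      congr 1
      conv_rhs => rw [show s = (s - x.length) + x.length from by omega]
      rw [Nat.add_mod_right]

/-- `w = h(v)` is a ternary word containing no overlaps (`2⁺`-powers) and no
squares `xx` with `|x| ≥ 2` in any arithmetic progression of odd difference. -/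
theorem image_contains_no_overlap_in_odd_AP
    (f v w : ℕ → ℕ) (hf : IsPaperfolding14 f)
    (hv0 : ∀ n, v (4 * n) = 2) (hv2 : ∀ n, v (4 * n + 2) = 3)
    (hv1 : ∀ n, v (2 * n + 1) = f (2 * n + 1))
    (hw : ∀ n, [w (2 * n), w (2 * n + 1)] = hMorph (v n)) :
    ∀ i j, Odd j →
      (∀ (q : ℚ) (x x' : List ℕ) (k : ℕ), 2 < q → x ≠ [] → x' <+: x →
        (((List.replicate k x).flatten ++ x').length : ℚ) = q * x.length →
        ¬ IsSubword (fun n => w (i + n * j)) ((List.replicate k x).flatten ++ x')) ∧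
      (∀ x : List ℕ, 2 ≤ x.length →
        ¬ IsSubword (fun n => w (i + n * j)) (x ++ x)) := by
  obtain ⟨g, a, hgf, hS⟩ := hf
  have hfval : ∀ n, f n = 1 ∨ f n = 4 := by
    intro n
    rw [← hgf]
    exact pf_values g a hS n 0
  -- structure of w
  have hP0 : ∀ p, p % 4 = 0 → w p = 1 := by
    intro p hp
    rcases (by omega : p % 8 = 0 ∨ p % 8 = 4) with h | h
    · obtain ⟨m, rfl⟩ : ∃ m, p = 8 * m := ⟨p / 8, by omega⟩
      have h1 := hw (4 * m)
      rw [hv0 m] at h1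
      simp only [hMorph] at h1
      norm_num at h1
      rw [show 8 * m = 2 * (4 * m) from by ring]
      exact h1.1
    · obtain ⟨m, rfl⟩ : ∃ m, p = 8 * m + 4 := ⟨p / 8, by omega⟩
      have h1 := hw (4 * m + 2)
      rw [hv2 m] at h1
      simp only [hMorph] at h1
      norm_num at h1
      rw [show 8 * m + 4 = 2 * (4 * m + 2) from by ring]
      exact h1.1
  have hP1 : ∀ p, p % 8 = 1 → w p = 1 := by
    intro p hp
    obtain ⟨m, rfl⟩ : ∃ m, p = 8 * m + 1 := ⟨p / 8, by omega⟩
    have h1 := hw (4 * m)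
    rw [hv0 m] at h1
    simp only [hMorph] at h1
    norm_num at h1
    rw [show 8 * m + 1 = 2 * (4 * m) + 1 from by ring]
    exact h1.2
  have hP5 : ∀ p, p % 8 = 5 → w p = 2 := by
    intro p hp
    obtain ⟨m, rfl⟩ : ∃ m, p = 8 * m + 5 := ⟨p / 8, by omega⟩
    have h1 := hw (4 * m + 2)
    rw [hv2 m] at h1
    simp only [hMorph] at h1
    norm_num at h1
    rw [show 8 * m + 5 = 2 * (4 * m + 2) + 1 from by ring]
    exact h1.2
  have hP2 : ∀ p, p % 4 = 2 → w p = 0 := by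
    intro p hp
    obtain ⟨m, rfl⟩ : ∃ m, p = 4 * m + 2 := ⟨p / 4, by omega⟩
    have h1 := hw (2 * m + 1)
    rw [hv1 m] at h1
    rw [show 4 * m + 2 = 2 * (2 * m + 1) from by ring]
    rcases hfval (2 * m + 1) with hfv | hfv <;> rw [hfv] at h1 <;>
      simp only [hMorph] at h1 <;> norm_num at h1 <;> exact h1.1
  have hP3 : ∀ p, p % 4 = 3 →
      (f ((p - 1) / 2) = 1 ∧ w p = 0) ∨ (f ((p - 1) / 2) = 4 ∧ w p = 2) := by
    intro p hp
    obtain ⟨m, rfl⟩ : ∃ m, p = 4 * m + 3 := ⟨p / 4, by omega⟩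
    have h1 := hw (2 * m + 1)
    rw [hv1 m] at h1
    rw [show (4 * m + 3 - 1) / 2 = 2 * m + 1 from by omega,
      show 4 * m + 3 = 2 * (2 * m + 1) + 1 from by ring]
    rcases hfval (2 * m + 1) with hfv | hfv <;> rw [hfv] at h1 <;>
      simp only [hMorph] at h1 <;> norm_num at h1
    · exact Or.inl ⟨hfv, h1.2⟩
    · exact Or.inr ⟨hfv, h1.2⟩
  have hg : ∀ σ, 2 ≤ σ → σ % 2 = 0 → ∀ e0 j', j' % 2 = 1 →
      ¬ (∀ r < σ, f (2 * (e0 + r * j') + 1) = f (2 * (e0 + (r + σ) * j') + 1)) := by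
    intro σ h2 he e0 j' hj' H
    apply pf_no_even_square g a hS σ h2 he 1 e0 j' hj'
    intro r hr
    rw [(hS 0).2.2.2 (e0 + r * j'), (hS 0).2.2.2 (e0 + (r + σ) * j'), hgf]
    exact H r hr
  intro i j hjodd
  have hj : j % 2 = 1 := Nat.odd_iff.mp hjodd
  constructor
  · -- overlaps
    intro q x x' k hq hxne hpre hlenq hsub
    obtain ⟨i0, hxeq⟩ := hsub
    have ht : 1 ≤ x.length := List.length_pos_iff.mpr hxne
    have hylen' : ((List.replicate k x).flatten ++ x').length
        = k * x.length + x'.length := by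
      simp [List.length_flatten, List.map_replicate, List.sum_replicate, smul_eq_mul]
    have hylen : 2 * x.length < ((List.replicate k x).flatten ++ x').length := by
      have h2 : (2 * (x.length : ℚ))
          < (((List.replicate k x).flatten ++ x').length : ℚ) := by
        rw [hlenq]
        have h0 : (0 : ℚ) < (x.length : ℚ) := by exact_mod_cast ht
        nlinarith
      exact_mod_cast h2
    have hgety : ∀ s, s < ((List.replicate k x).flatten ++ x').length →
        ((List.replicate k x).flatten ++ x')[s]? = some (w (i + (i0 + s) * j)) := by
      intro s hs
      conv_lhs => rw [hxeq]
      rw [List.getElem?_map, List.getElem?_range hs]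
      rfl
    have heqs : ∀ r, r < ((List.replicate k x).flatten ++ x').length - x.length →
        w (i + i0 * j + r * j) = w (i + i0 * j + r * j + x.length * j) := by
      intro r hr
      have h1 := hgety r (by omega)
      have h2 := hgety (r + x.length) (by omega)
      have h3 : ((List.replicate k x).flatten ++ x')[r]?
          = ((List.replicate k x).flatten ++ x')[r + x.length]? := by
        rw [rep_getElem? x x' hpre k r (by omega),
          rep_getElem? x x' hpre k (r + x.length) (by omega), Nat.add_mod_right]
      rw [h1, h2] at h3
      have h4 := Option.some.inj h3
      rw [show i + (i0 + r) * j = i + i0 * j + r * j from by ring,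
        show i + (i0 + (r + x.length)) * j = i + i0 * j + r * j + x.length * j
          from by ring] at h4
      exact h4
    exact key_lemma w f hP0 hP2 hP1 hP5 hP3 hg j hj (i + i0 * j) x.length
      (((List.replicate k x).flatten ++ x').length - x.length) ht (by omega) (by omega) heqs
  · -- squares
    intro x hx2 hsub
    obtain ⟨i0, hxeq⟩ := hsub
    set t := x.length with htdef
    have hgety : ∀ s, s < (x ++ x).length → (x ++ x)[s]? = some (w (i + (i0 + s) * j)) := by
      intro s hs
      conv_lhs => rw [hxeq]
      rw [List.getElem?_map, List.getElem?_range hs]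
      rfl
    have heqs : ∀ r, r < t →
        w (i + i0 * j + r * j) = w (i + i0 * j + r * j + t * j) := by
      intro r hr
      have hlen : (x ++ x).length = t + t := by simp [htdef]
      have h1 := hgety r (by omega)
      have h2 := hgety (r + t) (by omega)
      have h3 : (x ++ x)[r]? = (x ++ x)[r + t]? := by
        rw [List.getElem?_append_left (show r < x.length from hr),
          List.getElem?_append_right (show x.length ≤ r + t from by omega)]
        congr 1
        omega
      rw [h1, h2] at h3
      have h4 : w (i + (i0 + r) * j) = w (i + (i0 + (r + t)) * j) := Option.some.inj h3
      rw [show i + (i0 + r) * j = i + i0 * j + r * j from by ring,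
        show i + (i0 + (r + t)) * j = i + i0 * j + r * j + t * j from by ring] at h4
      exact h4
    exact key_lemma w f hP0 hP2 hP1 hP5 hP3 hg j hj (i + i0 * j) t t
      (by omega) hx2 le_rfl heqs
end

section
/- There exists a 2-dimensional word w over a 4-letter alphabet such that every line of w is 3^+-power-free: for all i_1, i_2 and coprime j_1, j_2, the word (w_{i_1+j_1 t, i_2+j_2 t})_{t≥0} contains no q-power for any rational q > 3. -/
def paperfold (n : ℕ) : ZMod 2 :=
  if h : n = 0 then 0 else if n % 2 = 0 then paperfold (n / 2) else ((n / 2 : ℕ) : ZMod 2)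
decreasing_by omega

theorem paperfold_two_pow_mul_odd (e u : ℕ) :
    paperfold (2 ^ e * (2 * u + 1)) = (u : ZMod 2) := by
  induction e with
  | zero =>
    rw [paperfold, dif_neg (by omega), if_neg (by omega)]
    congr 1
    omega
  | succ e ih =>
    rw [paperfold, dif_neg (by positivity), pow_succ, Nat.mul_right_comm,
      if_pos (Nat.mul_mod_left _ _), Nat.mul_div_cancel _ two_pos, ih]

theorem Nat.eq_two_pow_mul_odd_of_mod_eq {n e : ℕ} (h : n % 2 ^ (e + 1) = 2 ^ e) :
    n = 2 ^ e * (2 * (n / 2 ^ (e + 1)) + 1) :=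
  calc n = 2 ^ (e + 1) * (n / 2 ^ (e + 1)) + n % 2 ^ (e + 1) := (Nat.div_add_mod n _).symm
    _ = _ := by rw [h, pow_succ]; ring

theorem paperfold_ne_add_two_pow_succ_mul {n e c : ℕ} (hn : n % 2 ^ (e + 1) = 2 ^ e)
    (hc : Odd c) :
    paperfold n ≠ paperfold (n + 2 ^ (e + 1) * c) := by
  obtain ⟨v, rfl⟩ := hc
  rw [Nat.eq_two_pow_mul_odd_of_mod_eq hn]
  generalize n / 2 ^ (e + 1) = u
  rw [show 2 ^ e * (2 * u + 1) + 2 ^ (e + 1) * (2 * v + 1) = 2 ^ e * (2 * (u + 2 * v + 1) + 1) by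
      ring, paperfold_two_pow_mul_odd, paperfold_two_pow_mul_odd, Ne,
    ZMod.natCast_eq_natCast_iff']
  omega

theorem Nat.exists_lt_add_mul_mod_eq {j m : ℕ} (hj : j.Coprime m) (hm : 0 < m) (a r : ℕ) :
    ∃ t < m, (a + j * t) % m = r % m := by
  have : NeZero m := ⟨hm.ne'⟩
  have hunit : (j : ZMod m) * ↑(ZMod.unitOfCoprime j hj)⁻¹ = 1 := by
    rw [← ZMod.coe_unitOfCoprime j hj, Units.mul_inv]
  refine ⟨(((r : ZMod m) - a) * ↑(ZMod.unitOfCoprime j hj)⁻¹).val, ZMod.val_lt _, ?_⟩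
  rw [← ZMod.natCast_eq_natCast_iff']
  push_cast
  rw [ZMod.natCast_zmod_val]
  linear_combination ((r : ZMod m) - a) * hunit

theorem exists_lt_paperfold_ne {j c : ℕ} (hj : Odd j) (hc : Odd c) (a e : ℕ) :
    ∃ t < 2 ^ (e + 1), paperfold (a + j * t) ≠ paperfold (a + j * t + 2 ^ (e + 1) * c) := by
  obtain ⟨t, ht, hmod⟩ :=
    Nat.exists_lt_add_mul_mod_eq (hj.coprime_two_right.pow_right _) (by positivity) a (2 ^ e)
  rw [Nat.mod_eq_of_lt (Nat.pow_lt_pow_right one_lt_two e.lt_succ_self)] at hmod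
  exact ⟨t, ht, paperfold_ne_add_two_pow_succ_mul hmod hc⟩

theorem exists_le_paperfold_add_mul_ne {j p : ℕ} (hj : Odd j) (hp : 0 < p) (a : ℕ) :
    ∃ t ≤ 2 * p, paperfold (a + j * t) ≠ paperfold (a + j * (t + p)) := by
  obtain ⟨e, o, ho, rfl⟩ := Nat.exists_eq_two_pow_mul_odd hp.ne'
  cases e with
  | succ e =>
    obtain ⟨t, ht, hne⟩ := exists_lt_paperfold_ne hj (hj.mul ho) a e
    refine ⟨t, ?_, by rwa [mul_add, ← add_assoc, mul_left_comm]⟩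
    have := Nat.le_mul_of_pos_right (2 ^ (e + 1)) ho.pos
    omega
  | zero =>
    rw [pow_zero, one_mul] at hp ⊢
    -- a mismatch between `t` and `t + 2o` is one between `t` and `t + o` or `t + o` and `t + 2o`
    obtain ⟨t, ht, hne⟩ := exists_lt_paperfold_ne hj (hj.mul ho) a 0
    by_cases hfirst : paperfold (a + j * t) = paperfold (a + j * (t + o))
    · refine ⟨t + o, by omega, ?_⟩
      rw [← hfirst]
      convert hne using 2
      ring
    · exact ⟨t, by omega, hfirst⟩

theorem List.prefix_append_flatten_replicate_append {α : Type*} {x x' : List α} (hx' : x' <+: x)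
    (k : ℕ) :
    (List.replicate k x).flatten ++ x' <+: x ++ ((List.replicate k x).flatten ++ x') := by
  have hcomm : (List.replicate k x).flatten ++ x = x ++ (List.replicate k x).flatten := by
    rw [← List.flatten_cons, ← List.replicate_succ, List.replicate_succ', List.flatten_append,
      List.flatten_singleton]
  exact ((List.prefix_append_right_inj _).2 hx').trans
    (hcomm ▸ (List.prefix_append_right_inj x).2 (List.prefix_append _ _))

theorem List.getElem_add_length_of_prefix_append {α : Type*} {l x : List α} (h : l <+: x ++ l)
    {t : ℕ} (ht : t + x.length < l.length) : l[t + x.length] = l[t] := by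
  rw [h.getElem ht, List.getElem_append_right (by omega)]
  simp

theorem IsSubword.exists_apply_add_length {α : Type*} {f : ℕ → α} {l x : List α}
    (hf : IsSubword f l) (hl : l <+: x ++ l) :
    ∃ s, ∀ t, t + x.length < l.length → f (s + (t + x.length)) = f (s + t) := by
  obtain ⟨s, hs⟩ := hf
  have hget : ∀ n (hn : n < l.length), l[n] = f (s + n) := fun n hn => by
    rw [List.getElem_of_eq hs hn, List.getElem_map, List.getElem_range]
  exact ⟨s, fun t ht => by
    rw [← hget _ ht, ← hget t (by omega), List.getElem_add_length_of_prefix_append hl ht]⟩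

theorem Int.odd_or_odd_of_gcd_eq_one {a b : ℤ} (h : Int.gcd a b = 1) : Odd a ∨ Odd b := by
  by_contra! hab
  simp only [Int.not_odd_iff_even] at hab
  have := Int.dvd_coe_gcd hab.1.two_dvd hab.2.two_dvd
  rw [h] at this
  norm_num at this

theorem nonneg_of_forall_add_mul_nonneg {i : ℕ} {j : ℤ} (h : ∀ t : ℕ, 0 ≤ (i : ℤ) + j * t) :
    0 ≤ j := by
  by_contra! hj
  have := h (i + 1)
  push_cast at this
  nlinarith

theorem exists_le_paperfold_line_ne {i : ℕ} {j : ℤ} (hpos : ∀ t : ℕ, 0 ≤ (i : ℤ) + j * t)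
    (hj : Odd j) {p : ℕ} (hp : 0 < p) (s : ℕ) :
    ∃ t ≤ 2 * p, paperfold ((i : ℤ) + j * ↑(s + (t + p))).toNat ≠
      paperfold ((i : ℤ) + j * ↑(s + t)).toNat := by
  obtain ⟨J, rfl⟩ := Int.eq_ofNat_of_zero_le (nonneg_of_forall_add_mul_nonneg hpos)
  obtain ⟨t, ht, hne⟩ :=
    exists_le_paperfold_add_mul_ne ((Int.odd_coe_nat J).mp hj) hp (i + J * s)
  have hcoord (n : ℕ) : ((i : ℤ) + J * n).toNat = i + J * n := by
    rw [← Int.toNat_natCast (i + J * n)]; push_cast; rfl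
  refine ⟨t, ht, fun h => hne ?_⟩
  rw [hcoord, hcoord] at h
  convert h.symm using 2 <;> ring

/-- There is a 2-dimensional word over a 4-letter alphabet all of whose lines
are `3⁺`-power-free. -/
theorem exists_two_dim_word_lines_three_plus_power_free :
    ∃ w : ℕ → ℕ → Fin 4,
      ∀ (i₁ i₂ : ℕ) (j₁ j₂ : ℤ), Int.gcd j₁ j₂ = 1 →
        (∀ t : ℕ, 0 ≤ (i₁ : ℤ) + j₁ * t) → (∀ t : ℕ, 0 ≤ (i₂ : ℤ) + j₂ * t) →
        ∀ (q : ℚ) (x x' : List (Fin 4)) (k : ℕ), 3 < q → x ≠ [] → x' <+: x →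
          (((List.replicate k x).flatten ++ x').length : ℚ) = q * x.length →
          ¬ IsSubword
            (fun t : ℕ => w ((i₁ : ℤ) + j₁ * t).toNat ((i₂ : ℤ) + j₂ * t).toNat)
            ((List.replicate k x).flatten ++ x') := by
  refine ⟨fun m n => finProdFinEquiv (paperfold m, paperfold n), ?_⟩
  intro i₁ i₂ j₁ j₂ hgcd hpos₁ hpos₂ q x x' k hq hx hx' hlen hsub
  have hp : 0 < x.length := List.length_pos_iff.mpr hx
  have hlong : 3 * x.length < ((List.replicate k x).flatten ++ x').length := by
    have : (3 * x.length : ℚ) < q * x.length := by gcongr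
    exact_mod_cast hlen ▸ this
  obtain ⟨s, hper⟩ :=
    hsub.exists_apply_add_length (List.prefix_append_flatten_replicate_append hx' k)
  rcases Int.odd_or_odd_of_gcd_eq_one hgcd with hj | hj
  · obtain ⟨t, ht, hne⟩ := exists_le_paperfold_line_ne hpos₁ hj hp s
    exact hne (congrArg Prod.fst (finProdFinEquiv.injective (hper t (by omega))))
  · obtain ⟨t, ht, hne⟩ := exists_le_paperfold_line_ne hpos₂ hj hp s
    exact hne (congrArg Prod.snd (finProdFinEquiv.injective (hper t (by omega))))
end
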